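/- Let A, B ≥ 0 be self-adjoint operators on a Hilbert space ℋ. If e^{−A}·e^{−B} is compact, then e^{−(A+B)} is compact, where A + B is the form sum. -/

import Mathlib

open MeasureTheory Set Filter Topology

noncomputable section

/-- The bounded Borel functional calculus of a self-adjoint operator on a complex
Hilbert space `ℋ`, encoded axiomatically: a star-algebra homomorphism from bounded
Borel functions on `ℝ` (only their values on the spectrum matter) into the bounded
operators, with the sup-norm bound and strong σ-continuity. This data is equivalent
to the projection-valued spectral measure of a self-adjoint operator with the given
spectrum. -/
structure SelfAdjointCalculus (ℋ : Type) [NormedAddCommGroup ℋ]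
    [InnerProductSpace ℂ ℋ] [CompleteSpace ℋ] where
  spectrum : Set ℝ
  spectrum_nonempty : spectrum.Nonempty
  spectrum_closed : IsClosed spectrum
  fc : (ℝ → ℂ) → (ℋ →L[ℂ] ℋ)
  fc_one : fc (fun _ => 1) = ContinuousLinearMap.id ℂ ℋ
  fc_add : ∀ f g, fc (f + g) = fc f + fc g
  fc_smul : ∀ (c : ℂ) (f), fc (c • f) = c • fc f
  fc_mul : ∀ f g, fc (f * g) = (fc f).comp (fc g)
  fc_star : ∀ f, fc (fun t => starRingEnd ℂ (f t)) = ContinuousLinearMap.adjoint (fc f)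
  fc_norm : ∀ (f) (C : ℝ), (∀ t ∈ spectrum, ‖f t‖ ≤ C) → ‖fc f‖ ≤ C
  fc_eqOn : ∀ f g, Set.EqOn f g spectrum → fc f = fc g
  fc_tendsto : ∀ (f : ℕ → ℝ → ℂ) (g : ℝ → ℂ) (C : ℝ),
    (∀ n t, ‖f n t‖ ≤ C) →
    (∀ t ∈ spectrum, Filter.Tendsto (fun n => f n t) Filter.atTop (nhds (g t))) →
    ∀ x : ℋ, Filter.Tendsto (fun n => fc (f n) x) Filter.atTop (nhds (fc g x))
  fc_proj_infinite : ∀ l ∈ spectrum, ∀ ε > 0,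
    fc (Set.indicator {t | dist t l < ε} (fun _ => 1)) ≠ 0

namespace SelfAdjointCalculus

variable {ℋ : Type} [NormedAddCommGroup ℋ] [InnerProductSpace ℂ ℋ] [CompleteSpace ℋ]

/-- The spectral projection `𝟙_I(H)`. -/
def proj (Φ : SelfAdjointCalculus ℋ) (I : Set ℝ) : ℋ →L[ℂ] ℋ :=
  Φ.fc (I.indicator (fun _ => 1))

/-- `B` is `H`-relatively compact: `B ∘ 𝟙_I(H)` is compact for every bounded Borel set
`I ⊆ ℝ`. -/
def RelCompactWrt (B : ℋ →L[ℂ] ℋ) (Φ : SelfAdjointCalculus ℋ) : Prop :=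
  ∀ I : Set ℝ, MeasurableSet I → Bornology.IsBounded I →
    IsCompactOperator (B.comp (Φ.proj I))

/-- The semigroup `e^{-tH}` given by the functional calculus. -/
def heat (Φ : SelfAdjointCalculus ℋ) (t : ℝ) : ℋ →L[ℂ] ℋ :=
  Φ.fc (fun x => Complex.exp (-(t * x)))

/-- The resolvent `(H - λ)⁻¹` given by the functional calculus. -/
def resolvent (Φ : SelfAdjointCalculus ℋ) (l : ℂ) : ℋ →L[ℂ] ℋ :=
  Φ.fc (fun t => ((t : ℂ) - l)⁻¹)

/-- The resolvent set of the self-adjoint operator: complex numbers away from the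
(real) spectrum. -/
def resolventSet (Φ : SelfAdjointCalculus ℋ) : Set ℂ :=
  {l : ℂ | ∀ t ∈ Φ.spectrum, (t : ℂ) ≠ l}

/-- Truncated quadratic form `(min(H,n) u | u)`, an approximation of `h[u]`. -/
def formApprox (Φ : SelfAdjointCalculus ℋ) (n : ℕ) (u : ℋ) : ℝ :=
  (inner ℂ (Φ.fc (fun t => ((min t (n : ℝ) : ℝ) : ℂ)) u) u : ℂ).re

/-- `u` belongs to the form domain `Q(H)` of a semibounded operator: the truncated
quadratic forms stay bounded. -/
def InFormDomain (Φ : SelfAdjointCalculus ℋ) (u : ℋ) : Prop :=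
  BddAbove (Set.range fun n => Φ.formApprox n u)

/-- The quadratic form `h[u] = (Hu|u)` (extended to the form domain). -/
def quadForm (Φ : SelfAdjointCalculus ℋ) (u : ℋ) : ℝ :=
  ⨆ n, Φ.formApprox n u

/-- The essential spectrum: points around which every spectral projection has
infinite-dimensional range. -/
def essSpectrum (Φ : SelfAdjointCalculus ℋ) : Set ℝ :=
  {l : ℝ | ∀ ε > 0, ¬ FiniteDimensional ℂ
    (LinearMap.range ((Φ.proj (Set.Ioo (l - ε) (l + ε))) : ℋ →ₗ[ℂ] ℋ))}

end SelfAdjointCalculus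

/-!
Cut both operators off at level `n`: `Kₙ = 𝟙_{≤n}(A) 𝟙_{≤n}(B) e^{-(A+B)}` is compact, because
`𝟙_{≤n}(A) = f(A) e^{-A}` and `𝟙_{≤n}(B) = e^{-B} g(B)` with `f, g` bounded. For
`v = e^{-(A+B)} u` the form inequalities `a[v], b[v] ≤ (a+b)[v] ≤ ‖u‖²` and Chebyshev's
inequality bound `‖𝟙_{>n}(A) v‖` and `‖𝟙_{>n}(B) v‖` by `‖u‖ / √n`, so `Kₙ → e^{-(A+B)}` in
operator norm, and a norm limit of compact operators is compact.
-/

lemma exp_neg_mul_mul_exp_neg_le_one {s t : ℝ} (hst : s ≤ t) :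
    Real.exp (-t) * s * Real.exp (-t) ≤ 1 := by
  have hpos := Real.exp_pos (-t)
  have hinv : Real.exp t * Real.exp (-t) = 1 := by
    rw [← Real.exp_add, add_neg_cancel, Real.exp_zero]
  rcases le_or_gt t 0 with ht | ht
  · nlinarith [mul_pos hpos hpos]
  · have hle : Real.exp (-t) ≤ 1 := Real.exp_le_one_iff.2 (by linarith)
    nlinarith [Real.add_one_le_exp t, mul_pos hpos hpos]

namespace SelfAdjointCalculus

variable {ℋ : Type} [NormedAddCommGroup ℋ] [InnerProductSpace ℂ ℋ] [CompleteSpace ℋ]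
  (Φ : SelfAdjointCalculus ℋ)

lemma adjoint_fc_ofReal (g : ℝ → ℝ) :
    ContinuousLinearMap.adjoint (Φ.fc fun t => (g t : ℂ)) = Φ.fc fun t => (g t : ℂ) := by
  rw [← Φ.fc_star]
  simp only [Complex.conj_ofReal]

lemma fc_comp_comm (f g : ℝ → ℂ) : (Φ.fc f).comp (Φ.fc g) = (Φ.fc g).comp (Φ.fc f) := by
  rw [← Φ.fc_mul, ← Φ.fc_mul, mul_comm]

lemma inner_fc_fc_ofReal (f : ℝ → ℂ) (g : ℝ → ℝ) (u : ℋ) :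
    inner ℂ (Φ.fc f (Φ.fc (fun t => (g t : ℂ)) u)) (Φ.fc (fun t => (g t : ℂ)) u)
      = inner ℂ (Φ.fc (fun t => (g t : ℂ) * f t * (g t : ℂ)) u) u := by
  rw [← ContinuousLinearMap.adjoint_inner_left, Φ.adjoint_fc_ofReal]
  change _ = inner ℂ (Φ.fc ((fun t => (g t : ℂ)) * f * fun t => (g t : ℂ)) u) u
  rw [Φ.fc_mul, Φ.fc_mul]
  rfl

lemma re_inner_fc_mul_self (g : ℝ → ℝ) (u : ℋ) :
    (inner ℂ (Φ.fc (fun t => ((g t * g t : ℝ) : ℂ)) u) u).re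
      = ‖Φ.fc (fun t => (g t : ℂ)) u‖ ^ 2 := by
  have h := Φ.inner_fc_fc_ofReal (fun _ => 1) g u
  rw [Φ.fc_one, ContinuousLinearMap.id_apply, inner_self_eq_norm_sq_to_K] at h
  simp only [mul_one, ← Complex.ofReal_mul] at h
  rw [← h]
  norm_cast

lemma re_inner_fc_nonneg (f : ℝ → ℝ) (hf : ∀ t ∈ Φ.spectrum, 0 ≤ f t) (u : ℋ) :
    0 ≤ (inner ℂ (Φ.fc (fun t => (f t : ℂ)) u) u).re := by
  have hsqrt : Φ.fc (fun t => (f t : ℂ)) = Φ.fc (fun t => ((√(f t) * √(f t) : ℝ) : ℂ)) :=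
    Φ.fc_eqOn _ _ fun t ht => by simp only [Real.mul_self_sqrt (hf t ht)]
  rw [hsqrt, re_inner_fc_mul_self]
  positivity

lemma re_inner_fc_mono (f g : ℝ → ℝ) (hfg : ∀ t ∈ Φ.spectrum, f t ≤ g t) (u : ℋ) :
    (inner ℂ (Φ.fc (fun t => (f t : ℂ)) u) u).re
      ≤ (inner ℂ (Φ.fc (fun t => (g t : ℂ)) u) u).re := by
  have hsplit : Φ.fc (fun t => (g t : ℂ))
      = Φ.fc (fun t => (f t : ℂ)) + Φ.fc (fun t => ((g t - f t : ℝ) : ℂ)) := by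
    rw [← Φ.fc_add]
    congr 1
    ext t
    simp
  have hdiff := Φ.re_inner_fc_nonneg (fun t => g t - f t) (fun t ht => sub_nonneg.2 (hfg t ht)) u
  rw [hsplit, add_apply, inner_add_left, Complex.add_re]
  linarith

lemma proj_eq_fc_ofReal (s : Set ℝ) : Φ.proj s = Φ.fc fun t => ((s.indicator 1 t : ℝ) : ℂ) := by
  rw [proj]
  congr 1
  ext t
  by_cases ht : t ∈ s <;> simp [ht]

lemma proj_compl (s : Set ℝ) : Φ.proj sᶜ = ContinuousLinearMap.id ℂ ℋ - Φ.proj s := by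
  rw [eq_sub_iff_add_eq, proj, proj, ← Φ.fc_add, ← Φ.fc_one]
  congr 1
  ext t
  by_cases ht : t ∈ s <;> simp [ht]

lemma norm_proj_apply_le (s : Set ℝ) (v : ℋ) : ‖Φ.proj s v‖ ≤ ‖v‖ := by
  have hnorm : ‖Φ.proj s‖ ≤ 1 := Φ.fc_norm _ _ fun t _ => by
    by_cases ht : t ∈ s <;> simp [ht]
  simpa using (Φ.proj s).le_of_opNorm_le hnorm v

lemma re_inner_proj_apply (s : Set ℝ) (v : ℋ) :
    (inner ℂ (Φ.proj s v) v).re = ‖Φ.proj s v‖ ^ 2 := by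
  have hidem : Φ.proj s = Φ.fc fun t => ((s.indicator 1 t * s.indicator 1 t : ℝ) : ℂ) := by
    rw [proj_eq_fc_ofReal]
    congr 1
    ext t
    by_cases ht : t ∈ s <;> simp [ht]
  conv_lhs => rw [hidem]
  rw [re_inner_fc_mul_self, proj_eq_fc_ofReal]

lemma quadForm_nonneg (hpos : Φ.spectrum ⊆ Ici 0) {v : ℋ} (hv : Φ.InFormDomain v) :
    0 ≤ Φ.quadForm v :=
  (Φ.re_inner_fc_nonneg _ (fun t ht => by simpa using hpos ht) v).trans (le_ciSup hv 0)

/-- Chebyshev's inequality for the spectral measure of `v`. -/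
lemma mul_sq_norm_proj_Ioi_le_quadForm (hpos : Φ.spectrum ⊆ Ici 0) (n : ℕ) {v : ℋ}
    (hv : Φ.InFormDomain v) : n * ‖Φ.proj (Ioi (n : ℝ)) v‖ ^ 2 ≤ Φ.quadForm v := by
  have hscale : Φ.fc (fun t => ((n * (Ioi (n : ℝ)).indicator 1 t : ℝ) : ℂ))
      = (n : ℂ) • Φ.proj (Ioi (n : ℝ)) := by
    rw [proj_eq_fc_ofReal, ← Φ.fc_smul]
    congr 1
    ext t
    simp
  have hcut : ∀ t ∈ Φ.spectrum, n * (Ioi (n : ℝ)).indicator 1 t ≤ min t n := fun t ht => by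
    by_cases htn : (n : ℝ) < t
    · simp [htn, htn.le]
    · simpa [htn] using hpos ht
  calc n * ‖Φ.proj (Ioi (n : ℝ)) v‖ ^ 2
      = (inner ℂ (Φ.fc (fun t => ((n * (Ioi (n : ℝ)).indicator 1 t : ℝ) : ℂ)) v) v).re := by
        rw [hscale, smul_apply, inner_smul_left, ← re_inner_proj_apply]
        simp
    _ ≤ Φ.formApprox n v := Φ.re_inner_fc_mono _ _ hcut v
    _ ≤ Φ.quadForm v := le_ciSup hv n

lemma norm_proj_Ioi_le (hpos : Φ.spectrum ⊆ Ici 0) {n : ℕ} (hn : 0 < n) {v : ℋ}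
    (hv : Φ.InFormDomain v) {c : ℝ} (hc : 0 ≤ c) (hq : Φ.quadForm v ≤ c ^ 2) :
    ‖Φ.proj (Ioi (n : ℝ)) v‖ ≤ c / √n := by
  have hn' : (0 : ℝ) < n := by exact_mod_cast hn
  rw [le_div_iff₀ (Real.sqrt_pos.2 hn')]
  refine (pow_le_pow_iff_left₀ (by positivity) hc two_ne_zero).1 ?_
  rw [mul_pow, Real.sq_sqrt hn'.le, mul_comm]
  exact (Φ.mul_sq_norm_proj_Ioi_le_quadForm hpos n hv).trans hq

lemma heat_eq_fc_ofReal (s : ℝ) : Φ.heat s = Φ.fc fun t => (Real.exp (-(s * t)) : ℂ) := by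
  simp [heat, Complex.ofReal_exp]

lemma formApprox_heat_one_le (m : ℕ) (u : ℋ) : Φ.formApprox m (Φ.heat 1 u) ≤ ‖u‖ ^ 2 := by
  have hsandwich := Φ.inner_fc_fc_ofReal (fun t => ((min t m : ℝ) : ℂ)) (fun t => Real.exp (-t)) u
  simp only [← Complex.ofReal_mul] at hsandwich
  calc Φ.formApprox m (Φ.heat 1 u)
      = (inner ℂ (Φ.fc (fun t => ((Real.exp (-t) * min t m * Real.exp (-t) : ℝ) : ℂ)) u) u).re := by
        rw [formApprox, heat_eq_fc_ofReal, ← hsandwich]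
        simp only [one_mul]
    _ ≤ (inner ℂ (Φ.fc (fun _ => ((1 : ℝ) : ℂ)) u) u).re :=
        Φ.re_inner_fc_mono _ _ (fun t _ => exp_neg_mul_mul_exp_neg_le_one (min_le_left t m)) u
    _ = ‖u‖ ^ 2 := by
        rw [Complex.ofReal_one, Φ.fc_one, ContinuousLinearMap.id_apply, inner_self_eq_norm_sq_to_K]
        norm_cast

lemma inFormDomain_heat_one (u : ℋ) : Φ.InFormDomain (Φ.heat 1 u) :=
  ⟨‖u‖ ^ 2, by rintro _ ⟨m, rfl⟩; exact Φ.formApprox_heat_one_le m u⟩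

lemma quadForm_heat_one_le (u : ℋ) : Φ.quadForm (Φ.heat 1 u) ≤ ‖u‖ ^ 2 :=
  ciSup_le fun m => Φ.formApprox_heat_one_le m u

lemma proj_eq_fc_comp_heat_one (s : Set ℝ) :
    Φ.proj s = (Φ.fc fun t => s.indicator (fun _ => 1) t * Complex.exp t).comp (Φ.heat 1) := by
  rw [heat, ← Φ.fc_mul, proj]
  congr 1
  ext t
  simp [mul_assoc, ← Complex.exp_add]

lemma proj_eq_heat_one_comp_fc (s : Set ℝ) :
    Φ.proj s = (Φ.heat 1).comp (Φ.fc fun t => s.indicator (fun _ => 1) t * Complex.exp t) :=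
  (Φ.proj_eq_fc_comp_heat_one s).trans (Φ.fc_comp_comm _ _)

lemma isCompactOperator_proj_comp_proj {ΦA ΦB : SelfAdjointCalculus ℋ}
    (hcpt : IsCompactOperator ((ΦA.heat 1).comp (ΦB.heat 1))) (s t : Set ℝ) :
    IsCompactOperator ((ΦA.proj s).comp (ΦB.proj t)) := by
  rw [ΦA.proj_eq_fc_comp_heat_one, ΦB.proj_eq_heat_one_comp_fc]
  exact (hcpt.comp_clm _).clm_comp _

lemma norm_sub_proj_proj_apply_le (ΦA ΦB : SelfAdjointCalculus ℋ) (s t : Set ℝ) (v : ℋ) :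
    ‖v - ΦA.proj s (ΦB.proj t v)‖ ≤ ‖ΦA.proj sᶜ v‖ + ‖ΦB.proj tᶜ v‖ := by
  have hsplit : v - ΦA.proj s (ΦB.proj t v) = ΦA.proj sᶜ v + ΦA.proj s (ΦB.proj tᶜ v) := by
    simp only [proj_compl, sub_apply, ContinuousLinearMap.id_apply, map_sub]
    abel
  rw [hsplit]
  exact (norm_add_le _ _).trans (add_le_add le_rfl (ΦA.norm_proj_apply_le _ _))

lemma norm_proj_comp_proj_comp_heat_one_sub_le {ΦA ΦB ΦS : SelfAdjointCalculus ℋ}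
    (hA : ΦA.spectrum ⊆ Ici 0) (hB : ΦB.spectrum ⊆ Ici 0)
    (hdom : ∀ u, ΦS.InFormDomain u ↔ (ΦA.InFormDomain u ∧ ΦB.InFormDomain u))
    (hform : ∀ u, ΦA.InFormDomain u → ΦB.InFormDomain u →
      ΦS.quadForm u = ΦA.quadForm u + ΦB.quadForm u)
    {n : ℕ} (hn : 0 < n) :
    ‖((ΦA.proj (Iic (n : ℝ))).comp (ΦB.proj (Iic (n : ℝ)))).comp (ΦS.heat 1) - ΦS.heat 1‖
      ≤ 2 / √n := by
  refine ContinuousLinearMap.opNorm_le_bound _ (by positivity) fun u => ?_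
  set v := ΦS.heat 1 u
  obtain ⟨hvA, hvB⟩ := (hdom v).1 (ΦS.inFormDomain_heat_one u)
  have hqS := ΦS.quadForm_heat_one_le u
  have hqA : ΦA.quadForm v ≤ ‖u‖ ^ 2 := by
    linarith [hform v hvA hvB, ΦB.quadForm_nonneg hB hvB]
  have hqB : ΦB.quadForm v ≤ ‖u‖ ^ 2 := by
    linarith [hform v hvA hvB, ΦA.quadForm_nonneg hA hvA]
  calc ‖(((ΦA.proj (Iic (n : ℝ))).comp (ΦB.proj (Iic (n : ℝ)))).comp (ΦS.heat 1) - ΦS.heat 1) u‖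
      = ‖v - ΦA.proj (Iic (n : ℝ)) (ΦB.proj (Iic (n : ℝ)) v)‖ := by
        rw [norm_sub_rev]
        rfl
    _ ≤ ‖ΦA.proj (Ioi (n : ℝ)) v‖ + ‖ΦB.proj (Ioi (n : ℝ)) v‖ := by
        simpa only [compl_Iic] using norm_sub_proj_proj_apply_le ΦA ΦB (Iic (n : ℝ)) (Iic (n : ℝ)) v
    _ ≤ ‖u‖ / √n + ‖u‖ / √n := add_le_add
        (ΦA.norm_proj_Ioi_le hA hn hvA (norm_nonneg u) hqA)
        (ΦB.norm_proj_Ioi_le hB hn hvB (norm_nonneg u) hqB)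
    _ = 2 / √n * ‖u‖ := by ring

end SelfAdjointCalculus

open SelfAdjointCalculus

theorem stmt13_general {ℋ : Type} [NormedAddCommGroup ℋ] [InnerProductSpace ℂ ℋ] [CompleteSpace ℋ]
    (ΦA ΦB ΦS : SelfAdjointCalculus ℋ)
    (hA : ΦA.spectrum ⊆ Set.Ici 0) (hB : ΦB.spectrum ⊆ Set.Ici 0)
    -- ΦS is the form sum A + B:
    (hdom : ∀ u, ΦS.InFormDomain u ↔ (ΦA.InFormDomain u ∧ ΦB.InFormDomain u))
    (hform : ∀ u, ΦA.InFormDomain u → ΦB.InFormDomain u →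
      ΦS.quadForm u = ΦA.quadForm u + ΦB.quadForm u)
    (hcpt : IsCompactOperator ((ΦA.heat 1).comp (ΦB.heat 1))) :
    IsCompactOperator (ΦS.heat 1) := by
  set K : ℕ → ℋ →L[ℂ] ℋ := fun n =>
    ((ΦA.proj (Iic (n : ℝ))).comp (ΦB.proj (Iic (n : ℝ)))).comp (ΦS.heat 1)
  have hKcpt : ∀ n, IsCompactOperator (K n) := fun n =>
    (isCompactOperator_proj_comp_proj hcpt _ _).comp_clm _
  have hbound : Tendsto (fun n : ℕ => 2 / √n) atTop (𝓝 0) :=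
    tendsto_const_nhds.div_atTop (Real.tendsto_sqrt_atTop.comp tendsto_natCast_atTop_atTop)
  have hK : Tendsto K atTop (𝓝 (ΦS.heat 1)) :=
    tendsto_iff_norm_sub_tendsto_zero.2 <| squeeze_zero' (.of_forall fun _ => norm_nonneg _)
      ((eventually_gt_atTop 0).mono fun _ hn =>
        norm_proj_comp_proj_comp_heat_one_sub_le hA hB hdom hform hn) hbound
  exact isCompactOperator_of_tendsto hK (Eventually.of_forall hKcpt)

/-- Let `A, B ≥ 0` be self-adjoint (calculi `ΦA`, `ΦB`) with `Q(A) ∩ Q(B)`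
dense, and let `A + B` be the form sum (calculus `ΦS`, whose form domain is
`Q(A) ∩ Q(B)` and whose form is the sum of the forms). If `e^{-A} e^{-B}` is compact,
then `e^{-(A+B)}` is compact. -/
theorem stmt13 {ℋ : Type} [NormedAddCommGroup ℋ] [InnerProductSpace ℂ ℋ] [CompleteSpace ℋ]
    (ΦA ΦB ΦS : SelfAdjointCalculus ℋ)
    (hA : ΦA.spectrum ⊆ Set.Ici 0) (hB : ΦB.spectrum ⊆ Set.Ici 0)
    (hdense : Dense {u : ℋ | ΦA.InFormDomain u ∧ ΦB.InFormDomain u})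
    -- ΦS is the form sum A + B:
    (hdom : ∀ u, ΦS.InFormDomain u ↔ (ΦA.InFormDomain u ∧ ΦB.InFormDomain u))
    (hform : ∀ u, ΦA.InFormDomain u → ΦB.InFormDomain u →
      ΦS.quadForm u = ΦA.quadForm u + ΦB.quadForm u)
    (hcpt : IsCompactOperator ((ΦA.heat 1).comp (ΦB.heat 1))) :
    IsCompactOperator (ΦS.heat 1) :=
  stmt13_general ΦA ΦB ΦS hA hB hdom hform hcpt
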